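/- Let μ > 0 with μ ≠ 1, and define F(x,y) = x²·y^(−2/μ) − y^(2−2/μ)/(1−μ) on the open upper half-plane {y > 0}. Then F is a first integral of the system ẋ = x² − y², ẏ = μxy: for all x ∈ ℝ and y > 0, (x² − y²)·∂F/∂x(x,y) + μxy·∂F/∂y(x,y) = 0. In particular, for each a ∈ ℝ the curve {x² = a·y^(2/μ) + y²/(1−μ)} is invariant under the phase flow of the system in {y > 0}. -/

import Mathlib

/-!
Along any solution, `d/dt F(x, y) = ẋ ∂ₓF + ẏ ∂ᵧF`, and after writing every power of `y` as a
multiple of `y^(−2/μ)` the two terms cancel identically once `μ ≠ 0, 1`. So `F` is constant on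
trajectories, and since `F = (x² − y²/(1−μ)) y^(−2/μ)` with `y^(−2/μ) = (y^(2/μ))⁻¹`, the level set
`F = a` in `{y > 0}` is exactly the curve `x² = a y^(2/μ) + y²/(1−μ)`.
-/

open Real

/-- `F(x,y) = x² y^(−2/μ) − y^(2−2/μ)/(1−μ)` on `{y > 0}`. -/
noncomputable def F (μ x y : ℝ) : ℝ :=
  x ^ 2 * y ^ (-2 / μ) - y ^ (2 - 2 / μ) / (1 - μ)

noncomputable def dFdx (μ x y : ℝ) : ℝ :=
  2 * x * y ^ (-2 / μ)

noncomputable def dFdy (μ x y : ℝ) : ℝ :=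
  x ^ 2 * (-2 / μ * y ^ (-2 / μ - 1)) - (2 - 2 / μ) * y ^ (2 - 2 / μ - 1) / (1 - μ)

section

variable {μ : ℝ}

theorem hasDerivAt_F_comp {x y : ℝ → ℝ} {x' y' t : ℝ} (hx : HasDerivAt x x' t)
    (hy : HasDerivAt y y' t) (hpos : 0 < y t) :
    HasDerivAt (fun s => F μ (x s) (y s))
      (x' * dFdx μ (x t) (y t) + y' * dFdy μ (x t) (y t)) t := by
  have h := ((hx.fun_pow 2).mul (hy.rpow_const (p := -2 / μ) (Or.inl hpos.ne'))).sub
    ((hy.rpow_const (p := 2 - 2 / μ) (Or.inl hpos.ne')).div_const (1 - μ))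
  refine h.congr_deriv ?_
  rw [dFdx, dFdy]
  ring

theorem hasDerivAt_F_left {y : ℝ} (x : ℝ) (hy : 0 < y) :
    HasDerivAt (fun x' => F μ x' y) (dFdx μ x y) x := by
  simpa using hasDerivAt_F_comp (μ := μ) (hasDerivAt_id x) (hasDerivAt_const x y) hy

theorem hasDerivAt_F_right {y : ℝ} (x : ℝ) (hy : 0 < y) :
    HasDerivAt (fun y' => F μ x y') (dFdy μ x y) y := by
  simpa using hasDerivAt_F_comp (μ := μ) (hasDerivAt_const y x) (hasDerivAt_id y) hy

theorem lieDeriv_F_eq_zero (hμ : μ ≠ 0) (hμ1 : μ ≠ 1) (x : ℝ) {y : ℝ} (hy : 0 < y) :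
    (x ^ 2 - y ^ 2) * dFdx μ x y + μ * x * y * dFdy μ x y = 0 := by
  have h1μ : (1 : ℝ) - μ ≠ 0 := sub_ne_zero.mpr hμ1.symm
  have e₁ : y ^ (-2 / μ - 1) = y ^ (-2 / μ) / y := by rw [rpow_sub hy, rpow_one]
  have e₂ : y ^ (2 - 2 / μ - 1) = y * y ^ (-2 / μ) := by
    rw [show (2 : ℝ) - 2 / μ - 1 = 1 + -2 / μ by ring, rpow_add hy, rpow_one]
  rw [dFdx, dFdy, e₁, e₂]
  field_simp
  ring

theorem F_along_solution_eq (hμ : μ ≠ 0) (hμ1 : μ ≠ 1) {x y : ℝ → ℝ}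
    (hx : ∀ t, HasDerivAt x (x t ^ 2 - y t ^ 2) t) (hy : ∀ t, HasDerivAt y (μ * x t * y t) t)
    (hpos : ∀ t, 0 < y t) (t t₀ : ℝ) :
    F μ (x t) (y t) = F μ (x t₀) (y t₀) := by
  have hderiv (s : ℝ) : HasDerivAt (fun s => F μ (x s) (y s)) 0 s :=
    (hasDerivAt_F_comp (hx s) (hy s) (hpos s)).congr_deriv
      (lieDeriv_F_eq_zero hμ hμ1 _ (hpos s))
  exact is_const_of_deriv_eq_zero (fun s => (hderiv s).differentiableAt)
    (fun s => (hderiv s).deriv) t t₀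

theorem F_eq_mul {y : ℝ} (x : ℝ) (hy : 0 < y) :
    F μ x y = (x ^ 2 - y ^ 2 / (1 - μ)) * y ^ (-2 / μ) := by
  rw [F, sub_eq_add_neg 2, ← neg_div, rpow_add hy, rpow_two]
  ring

theorem sq_eq_iff_F_eq {y : ℝ} (a x : ℝ) (hy : 0 < y) :
    x ^ 2 = a * y ^ (2 / μ) + y ^ 2 / (1 - μ) ↔ F μ x y = a := by
  have hY : 0 < y ^ (2 / μ) := rpow_pos_of_pos hy _
  rw [F_eq_mul x hy, neg_div, rpow_neg hy.le, ← div_eq_mul_inv, div_eq_iff hY.ne']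
  constructor <;> intro h <;> linarith

end

theorem stmt15 (μ : ℝ) (hμ : 0 < μ) (hμ1 : μ ≠ 1) :
    (∀ x y : ℝ, 0 < y →
      (x ^ 2 - y ^ 2) * deriv (fun x' => F μ x' y) x +
        μ * x * y * deriv (fun y' => F μ x y') y = 0) ∧
    (∀ a : ℝ, ∀ x y : ℝ → ℝ,
      (∀ t, HasDerivAt x (x t ^ 2 - y t ^ 2) t) →
      (∀ t, HasDerivAt y (μ * x t * y t) t) →
      (∀ t, 0 < y t) →
      ∀ t₀ : ℝ, x t₀ ^ 2 = a * y t₀ ^ (2 / μ) + y t₀ ^ 2 / (1 - μ) →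
        ∀ t : ℝ, x t ^ 2 = a * y t ^ (2 / μ) + y t ^ 2 / (1 - μ)) := by
  refine ⟨fun x y hy => ?_, fun a x y hx hy hpos t₀ h₀ t => ?_⟩
  · rw [(hasDerivAt_F_left x hy).deriv, (hasDerivAt_F_right x hy).deriv]
    exact lieDeriv_F_eq_zero hμ.ne' hμ1 x hy
  · rw [sq_eq_iff_F_eq a _ (hpos t), F_along_solution_eq hμ.ne' hμ1 hx hy hpos t t₀,
      ← sq_eq_iff_F_eq a _ (hpos t₀)]
    exact h₀
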